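/- arXiv:1802.10564 — 2 statements merged into one kernel-verified Lean document; each statement's English description precedes it below -/
import Mathlib

section
/- For all real b > 0, f(2,b) = (1/2)·f(1,b), where f(a,b) = ∫_0^∞ (x²+1)^(−a) · (φ(x) + √(φ(x)))^(−1/2) dx with φ(x) = 1 + (4/b²)·(x/(x²+1))². -/
open Real MeasureTheory

noncomputable def φ (b x : ℝ) : ℝ := 1 + (4 / b ^ 2) * (x / (x ^ 2 + 1)) ^ 2

noncomputable def f (a b : ℝ) : ℝ :=
  ∫ x in Set.Ioi (0 : ℝ),
    (x ^ 2 + 1) ^ (-a) * (φ b x + Real.sqrt (φ b x)) ^ (-(1 / 2) : ℝ)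

noncomputable def g (b x : ℝ) : ℝ := (φ b x + Real.sqrt (φ b x)) ^ (-(1 / 2) : ℝ)

lemma phi_ge_one (b x : ℝ) : 1 ≤ φ b x := by
  have h1 : (0:ℝ) ≤ 4 / b ^ 2 := by positivity
  have h2 : (0:ℝ) ≤ (x / (x ^ 2 + 1)) ^ 2 := sq_nonneg _
  unfold φ; nlinarith

lemma base_pos (b x : ℝ) : 0 < φ b x + Real.sqrt (φ b x) := by
  have := phi_ge_one b x
  have := Real.sqrt_nonneg (φ b x)
  linarith

lemma g_nonneg (b x : ℝ) : 0 ≤ g b x := Real.rpow_nonneg (base_pos b x).le _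

lemma g_le_one (b x : ℝ) : g b x ≤ 1 := by
  apply Real.rpow_le_one_of_one_le_of_nonpos
  · have := phi_ge_one b x
    have := Real.sqrt_nonneg (φ b x)
    linarith
  · norm_num

lemma cont_g (b : ℝ) : Continuous (g b) := by
  have h1 : Continuous fun x : ℝ => x / (x ^ 2 + 1) :=
    continuous_id.div (by continuity) (fun x => by positivity)
  have hφ : Continuous (φ b) :=
    continuous_const.add (continuous_const.mul (h1.pow 2))
  have hs : Continuous fun x => φ b x + Real.sqrt (φ b x) :=
    hφ.add (Real.continuous_sqrt.comp hφ)
  exact hs.rpow_const (fun x => Or.inl (base_pos b x).ne')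

lemma integrable_aux {k : ℝ → ℝ} (hk : Continuous k)
    (hb : ∀ x, |k x| ≤ (1 + x ^ 2)⁻¹) : IntegrableOn k (Set.Ioi 0) :=
  (integrable_inv_one_add_sq.integrableOn).mono' hk.aestronglyMeasurable
    (Filter.Eventually.of_forall fun x => by simpa [Real.norm_eq_abs] using hb x)

lemma rpow_neg_two' {y : ℝ} (hy : 0 < y) : y ^ (-2 : ℝ) = (y ^ 2)⁻¹ := by
  rw [show (-2 : ℝ) = ((-2 : ℤ) : ℝ) by norm_num, Real.rpow_intCast]
  simp [zpow_ofNat]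

theorem stmt_1 (b : ℝ) (hb : 0 < b) : f 2 b = (1 / 2) * f 1 b := by
  have hx1 : ∀ x : ℝ, (0:ℝ) < x ^ 2 + 1 := fun x => by positivity
  set F : ℝ → ℝ := fun x => (x ^ 2 + 1) ^ (-(2:ℝ)) * g b x with hF
  set H : ℝ → ℝ := fun x => x ^ 2 * ((x ^ 2 + 1) ^ 2)⁻¹ * g b x with hH
  -- continuity
  have hbase : Continuous fun x : ℝ => x ^ 2 + 1 := (continuous_pow 2).add continuous_const
  have hFc : Continuous F :=
    (hbase.rpow_const (fun x => Or.inl (hx1 x).ne')).mul (cont_g b)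
  have hHc : Continuous H :=
    (((continuous_pow 2).mul ((hbase.pow 2).inv₀ (fun x => pow_ne_zero 2 (hx1 x).ne'))).mul (cont_g b))
  -- bounds
  have hinv : ∀ x : ℝ, ((x ^ 2 + 1) ^ 2)⁻¹ * (x ^ 2 + 1) ≤ 1 := by
    intro x
    rw [sq, mul_inv, mul_assoc, inv_mul_cancel₀ (hx1 x).ne']
    rw [mul_one]
    exact inv_le_one_of_one_le₀ (by nlinarith)
  have hFb : ∀ x : ℝ, |F x| ≤ (1 + x ^ 2)⁻¹ := by
    intro x
    have h0 : 0 ≤ F x := mul_nonneg (Real.rpow_nonneg (hx1 x).le _) (g_nonneg b x)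
    rw [abs_of_nonneg h0, hF]
    simp only
    rw [rpow_neg_two' (hx1 x)]
    have h2 : ((x ^ 2 + 1) ^ 2)⁻¹ * g b x ≤ ((x ^ 2 + 1) ^ 2)⁻¹ * 1 :=
      mul_le_mul_of_nonneg_left (g_le_one b x) (by positivity)
    rw [mul_one] at h2
    refine h2.trans ?_
    rw [add_comm 1 (x^2), ← div_le_one (by positivity), div_eq_mul_inv, inv_inv]
    exact hinv x
  have hHb : ∀ x : ℝ, |H x| ≤ (1 + x ^ 2)⁻¹ := by
    intro x
    have h0 : 0 ≤ H x := mul_nonneg (by positivity) (g_nonneg b x)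
    rw [abs_of_nonneg h0, hH]
    simp only
    have h2 : x ^ 2 * ((x ^ 2 + 1) ^ 2)⁻¹ * g b x ≤ x ^ 2 * ((x ^ 2 + 1) ^ 2)⁻¹ * 1 :=
      mul_le_mul_of_nonneg_left (g_le_one b x) (by positivity)
    rw [mul_one] at h2
    refine h2.trans ?_
    rw [add_comm 1 (x^2), ← div_le_one (by positivity), div_eq_mul_inv, inv_inv]
    calc x ^ 2 * ((x ^ 2 + 1) ^ 2)⁻¹ * (x ^ 2 + 1)
        ≤ (x ^ 2 + 1) * ((x ^ 2 + 1) ^ 2)⁻¹ * (x ^ 2 + 1) := by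
          apply mul_le_mul_of_nonneg_right _ (hx1 x).le
          exact mul_le_mul_of_nonneg_right (by nlinarith) (by positivity)
      _ = 1 := by field_simp
  have hFint : IntegrableOn F (Set.Ioi 0) := integrable_aux hFc hFb
  have hHint : IntegrableOn H (Set.Ioi 0) := integrable_aux hHc hHb
  -- symmetry of g under inversion
  have hgsymm : ∀ x : ℝ, 0 < x → g b x⁻¹ = g b x := by
    intro x hx
    unfold g φ
    have hfrac : x⁻¹ / ((x⁻¹) ^ 2 + 1) = x / (x ^ 2 + 1) := by
      rw [div_eq_div_iff (by positivity) (by positivity)]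
      field_simp
      ring
    rw [hfrac]
  -- substitution x ↦ x⁻¹
  have hsub := integral_comp_rpow_Ioi F (p := (-1 : ℝ)) (by norm_num)
  have hLHS : ∀ x ∈ Set.Ioi (0:ℝ),
      (|(-1:ℝ)| * x ^ ((-1:ℝ) - 1)) • F (x ^ (-1:ℝ)) = H x := by
    intro x hx
    have hx0 : (0:ℝ) < x := hx
    have e1 : ((-1:ℝ) - 1) = (-2:ℝ) := by norm_num
    rw [e1, rpow_neg_two' hx0, Real.rpow_neg_one, smul_eq_mul]
    rw [hF, hH]
    simp only
    rw [hgsymm x hx0, rpow_neg_two' (by positivity : (0:ℝ) < (x⁻¹) ^ 2 + 1)]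
    have hxne : x ≠ 0 := hx0.ne'
    have hne : (x ^ 2 + 1 : ℝ) ≠ 0 := (hx1 x).ne'
    field_simp
    ring
  have hHF : ∫ x in Set.Ioi (0:ℝ), H x = ∫ x in Set.Ioi (0:ℝ), F x := by
    rw [← hsub]
    exact (setIntegral_congr_fun measurableSet_Ioi hLHS).symm
  -- split f 1 b
  have hsplit : ∀ x ∈ Set.Ioi (0:ℝ),
      (x ^ 2 + 1) ^ (-(1:ℝ)) * g b x = F x + H x := by
    intro x _
    rw [Real.rpow_neg_one, hF, hH]
    simp only
    rw [rpow_neg_two' (hx1 x)]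
    have hne : (x ^ 2 + 1 : ℝ) ≠ 0 := (hx1 x).ne'
    field_simp
    ring
  have hf2 : f 2 b = ∫ x in Set.Ioi (0:ℝ), F x := rfl
  have hf1 : f 1 b = ∫ x in Set.Ioi (0:ℝ), (F x + H x) := by
    rw [show f 1 b = ∫ x in Set.Ioi (0:ℝ), (x ^ 2 + 1) ^ (-(1:ℝ)) * g b x from rfl]
    exact setIntegral_congr_fun measurableSet_Ioi hsplit
  rw [hf1, integral_add hFint hHint, hHF] at *
  rw [hf2]
  ring
end

section
/- One has f(3/2, √3) = (3/√8) · [ ∫_{√3/2}^1 dy / √( y·(1+y)·(4y²−3)·( y + √(4y²−3) ) ) + ∫_{√3/2}^1 dy / √( y·(1+y)·(4y²−3)·( y − √(4y²−3) ) ) ], where f(a,b) = ∫_0^∞ (x²+1)^(−a) · (φ(x) + √(φ(x)))^(−1/2) dx with φ(x) = 1 + (4/b²)·(x/(x²+1))². -/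
open Real MeasureTheory

noncomputable def Y (x : ℝ) : ℝ := (Real.sqrt (φ (Real.sqrt 3) x))⁻¹

noncomputable def Yd (x : ℝ) : ℝ := -((4/3) * (x * (1 - x^2)) * (Y x)^3 / (x^2+1)^3)

lemma phi_eq (x : ℝ) : φ (Real.sqrt 3) x = 1 + (4/3) * (x/(x^2+1))^2 := by
  have : Real.sqrt 3 ^ 2 = 3 := Real.sq_sqrt (by norm_num)
  rw [φ, this]

lemma one_le_phi (x : ℝ) : 1 ≤ φ (Real.sqrt 3) x := by
  rw [phi_eq]; nlinarith [sq_nonneg (x/(x^2+1))]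

lemma phi_pos (x : ℝ) : 0 < φ (Real.sqrt 3) x := lt_of_lt_of_le one_pos (one_le_phi x)

lemma Y_pos (x : ℝ) : 0 < Y x := by
  rw [Y]; exact inv_pos.mpr (Real.sqrt_pos.mpr (phi_pos x))

lemma hasDerivAt_Y (x : ℝ) : HasDerivAt Y (Yd x) x := by
  have hA : (0:ℝ) < x^2 + 1 := by positivity
  have ht : HasDerivAt (fun x : ℝ => x/(x^2+1)) ((1-x^2)/(x^2+1)^2) x := by
    have := (hasDerivAt_id x).div (((hasDerivAt_pow 2 x).add_const 1)) (ne_of_gt hA)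
    refine this.congr_deriv ?_
    simp only [id_eq]
    ring
  have hψ : HasDerivAt (fun x : ℝ => φ (Real.sqrt 3) x)
      ((8/3) * (x/(x^2+1)) * ((1-x^2)/(x^2+1)^2)) x := by
    have h2 : HasDerivAt (fun x : ℝ => 1 + (4/3) * (x/(x^2+1))^2)
        ((4/3) * (2 * (x/(x^2+1)) * ((1-x^2)/(x^2+1)^2))) x := by
      have := ((ht.pow 2).const_mul ((4:ℝ)/3)).const_add 1
      refine this.congr_deriv ?_
      push_cast
      ring
    simp only [phi_eq]
    convert h2 using 1
    push_cast
    ring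
  have hs : Real.sqrt (φ (Real.sqrt 3) x) ≠ 0 := ne_of_gt (Real.sqrt_pos.mpr (phi_pos x))
  have hsq : HasDerivAt (fun x => Real.sqrt (φ (Real.sqrt 3) x))
      ((8/3) * (x/(x^2+1)) * ((1-x^2)/(x^2+1)^2) / (2 * Real.sqrt (φ (Real.sqrt 3) x))) x :=
    hψ.sqrt (ne_of_gt (phi_pos x))
  have := hsq.inv hs
  refine this.congr_deriv ?_
  rw [Yd, Y]
  have h1 : Real.sqrt (φ (Real.sqrt 3) x) ^ 2 = φ (Real.sqrt 3) x :=
    Real.sq_sqrt (phi_pos x).le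
  field_simp
  ring

lemma t_strictMonoOn : StrictMonoOn (fun x : ℝ => x/(x^2+1)) (Set.Icc 0 1) := by
  intro a ha b hb hab
  simp only [Set.mem_Icc] at ha hb
  rw [div_lt_div_iff₀ (by positivity) (by positivity)]
  nlinarith [mul_le_of_le_one_right ha.1 hb.2, ha.1, hb.1, hb.2]

lemma Y_strictAntiOn : StrictAntiOn Y (Set.Icc 0 1) := by
  intro a ha b hb hab
  have h1 : (fun x : ℝ => x/(x^2+1)) a < (fun x : ℝ => x/(x^2+1)) b := t_strictMonoOn ha hb hab
  have ha' : 0 ≤ a / (a^2+1) := by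
    have := ha.1; positivity
  have hφ : φ (Real.sqrt 3) a < φ (Real.sqrt 3) b := by
    rw [phi_eq, phi_eq]
    have : (a/(a^2+1))^2 < (b/(b^2+1))^2 := by nlinarith [h1]
    nlinarith [this]
  have : Real.sqrt (φ (Real.sqrt 3) a) < Real.sqrt (φ (Real.sqrt 3) b) :=
    Real.sqrt_lt_sqrt (phi_pos a).le hφ
  rw [Y, Y]
  exact inv_strictAnti₀ (Real.sqrt_pos.mpr (phi_pos a)) this

lemma phi_continuous : Continuous fun x : ℝ => φ (Real.sqrt 3) x := by
  rw [funext phi_eq]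
  have h : Continuous fun x : ℝ => x/(x^2+1) :=
    continuous_id.div (by continuity) (fun x => by positivity)
  continuity

lemma Y_continuousOn : ContinuousOn Y (Set.Icc 0 1) := by
  apply ContinuousOn.inv₀
  · exact (Real.continuous_sqrt.comp phi_continuous).continuousOn
  · intro x _; exact ne_of_gt (Real.sqrt_pos.mpr (phi_pos x))

lemma Y_zero : Y 0 = 1 := by
  rw [Y, phi_eq]; norm_num

lemma Y_one : Y 1 = Real.sqrt 3 / 2 := by
  have h4 : Real.sqrt 4 = 2 := by
    rw [show (4:ℝ) = 2^2 by norm_num, Real.sqrt_sq (by norm_num : (0:ℝ) ≤ 2)]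
  rw [Y, phi_eq]
  rw [show (1:ℝ) + 4 / 3 * (1 / (1 ^ 2 + 1)) ^ 2 = (3/4)⁻¹ by norm_num,
    Real.sqrt_inv, inv_inv, Real.sqrt_div (by norm_num : (0:ℝ) ≤ 3), h4]

lemma Y_image : Y '' Set.Ioo 0 1 = Set.Ioo (Real.sqrt 3 / 2) 1 := by
  apply Set.Subset.antisymm
  · rintro _ ⟨x, hx, rfl⟩
    constructor
    · rw [← Y_one]
      exact Y_strictAntiOn (Set.mem_Icc.mpr ⟨hx.1.le, hx.2.le⟩) (Set.mem_Icc.mpr ⟨zero_le_one, le_refl 1⟩) hx.2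
    · rw [← Y_zero]
      exact Y_strictAntiOn (Set.mem_Icc.mpr ⟨le_refl 0, zero_le_one⟩) (Set.mem_Icc.mpr ⟨hx.1.le, hx.2.le⟩) hx.1
  · have := intermediate_value_Ioo' (zero_le_one) Y_continuousOn
    rw [Y_zero, Y_one] at this
    exact this

lemma Y_injOn : Set.InjOn Y (Set.Ioo 0 1) :=
  (Y_strictAntiOn.mono (Set.Ioo_subset_Icc_self)).injOn

lemma Y_inv_eq {x : ℝ} (hx : x ≠ 0) : Y x⁻¹ = Y x := by
  rw [Y, Y, phi_eq, phi_eq]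
  congr 3
  field_simp
  ring

lemma sqrtY (x : ℝ) : Real.sqrt (φ (Real.sqrt 3) x) = (Y x)⁻¹ := by
  rw [Y, inv_inv]

lemma Ysq (x : ℝ) : (Y x)^2 * φ (Real.sqrt 3) x = 1 := by
  rw [Y, inv_pow]
  rw [Real.sq_sqrt (phi_pos x).le]
  exact inv_mul_cancel₀ (ne_of_gt (phi_pos x))

lemma fourY (x : ℝ) : 4 * (Y x)^2 - 3 = (Y x * (1-x^2) / (x^2+1))^2 := by
  have h := Ysq x
  rw [phi_eq] at h
  have hA : (x:ℝ)^2 + 1 ≠ 0 := by positivity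
  field_simp at h ⊢
  nlinarith [h]

lemma sqrt_fourY {x : ℝ} (hx : x ∈ Set.Ioo (0:ℝ) 1) :
    Real.sqrt (4 * (Y x)^2 - 3) = Y x * (1-x^2) / (x^2+1) := by
  rw [fourY x, Real.sqrt_sq]
  have h1 : 0 < Y x := Y_pos x
  have : (0:ℝ) < 1 - x^2 := by nlinarith [hx.1, hx.2]
  positivity

lemma sqrt8 : Real.sqrt 8 = 2 * Real.sqrt 2 := by
  rw [show (8:ℝ) = 2^2 * 2 by norm_num, Real.sqrt_mul (by positivity),
    Real.sqrt_sq (by norm_num : (0:ℝ) ≤ 2)]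

lemma rpow_A {x : ℝ} : (x^2+1 : ℝ) ^ (-(3/2) : ℝ) = ((x^2+1) * Real.sqrt (x^2+1))⁻¹ := by
  have hA : (0:ℝ) < x^2+1 := by positivity
  rw [Real.rpow_neg hA.le]
  congr 1
  rw [show (3/2 : ℝ) = 1 + 1/2 by norm_num, Real.rpow_add hA, Real.rpow_one,
    ← Real.sqrt_eq_rpow]

lemma rpow_phi (x : ℝ) :
    (φ (Real.sqrt 3) x + Real.sqrt (φ (Real.sqrt 3) x)) ^ (-(1/2) : ℝ)
      = Y x / Real.sqrt (1 + Y x) := by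
  have hy : 0 < Y x := Y_pos x
  have h5 : φ (Real.sqrt 3) x + Real.sqrt (φ (Real.sqrt 3) x) = (1 + Y x) / (Y x)^2 := by
    rw [sqrtY]
    have h := Ysq x
    field_simp
    nlinarith [h]
  have hpos : (0:ℝ) < φ (Real.sqrt 3) x + Real.sqrt (φ (Real.sqrt 3) x) := by
    have := phi_pos x
    have := Real.sqrt_nonneg (φ (Real.sqrt 3) x)
    linarith
  rw [Real.rpow_neg hpos.le, ← Real.sqrt_eq_rpow, h5,
    show (1 + Y x)/(Y x)^2 = (Real.sqrt (1 + Y x) / Y x)^2 by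
      rw [div_pow, Real.sq_sqrt (by linarith)]]
  rw [Real.sqrt_sq (by positivity), inv_div]

lemma abs_Yd {x : ℝ} (hx : x ∈ Set.Ioo (0:ℝ) 1) :
    |Yd x| = (4/3) * (x*(1-x^2)) * (Y x)^3 / (x^2+1)^3 := by
  have h1 : (0:ℝ) < 1 - x^2 := by nlinarith [hx.1, hx.2]
  have hy := Y_pos x
  have hx1 := hx.1
  rw [Yd, abs_neg, abs_of_pos (by positivity)]

lemma rad2 {x : ℝ} (hx : x ∈ Set.Ioo (0:ℝ) 1) :
    Y x * (1 + Y x) * (4 * (Y x)^2 - 3) * (Y x - Real.sqrt (4 * (Y x)^2 - 3))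
      = (Real.sqrt 2 * (x*(1-x^2)) * (Y x)^2 / ((x^2+1) * Real.sqrt (x^2+1))
          * Real.sqrt (1 + Y x))^2 := by
  have h1 : (0:ℝ) < 1 - x^2 := by nlinarith [hx.1, hx.2]
  have hy := Y_pos x
  have hA : (0:ℝ) < x^2+1 := by positivity
  have hw2 : (Real.sqrt 2)^2 = 2 := Real.sq_sqrt (by norm_num)
  have hr2 : (Real.sqrt (x^2+1))^2 = x^2+1 := Real.sq_sqrt hA.le
  have hq2 : (Real.sqrt (1 + Y x))^2 = 1 + Y x := Real.sq_sqrt (by linarith)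
  have h2 : Y x - Real.sqrt (4 * (Y x)^2 - 3) = Y x * (2*x^2)/(x^2+1) := by
    rw [sqrt_fourY hx]; field_simp; ring
  rw [h2, fourY, mul_pow, hq2]
  simp only [div_pow, mul_pow]
  rw [hw2, hr2]
  have hr0 : Real.sqrt (x^2+1) ≠ 0 := by positivity
  field_simp

lemma key2 {x : ℝ} (hx : x ∈ Set.Ioo (0:ℝ) 1) :
    3 / Real.sqrt 8 * (|Yd x| *
      (1 / Real.sqrt (Y x * (1 + Y x) * (4 * (Y x)^2 - 3) *
        (Y x - Real.sqrt (4 * (Y x)^2 - 3)))))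
    = (x^2+1 : ℝ) ^ (-(3/2) : ℝ) *
        (φ (Real.sqrt 3) x + Real.sqrt (φ (Real.sqrt 3) x)) ^ (-(1/2) : ℝ) := by
  have h1 : (0:ℝ) < 1 - x^2 := by nlinarith [hx.1, hx.2]
  have hy := Y_pos x
  have hA : (0:ℝ) < x^2+1 := by positivity
  have hx1 := hx.1
  have hw2 : (Real.sqrt 2)^2 = 2 := Real.sq_sqrt (by norm_num)
  have hr2 : (Real.sqrt (x^2+1))^2 = x^2+1 := Real.sq_sqrt hA.le
  have hq2 : (Real.sqrt (1 + Y x))^2 = 1 + Y x := Real.sq_sqrt (by linarith)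
  have hw : (0:ℝ) < Real.sqrt 2 := by positivity
  have hr : (0:ℝ) < Real.sqrt (x^2+1) := Real.sqrt_pos.mpr hA
  have hq : (0:ℝ) < Real.sqrt (1 + Y x) := Real.sqrt_pos.mpr (by linarith)
  rw [abs_Yd hx, rad2 hx, Real.sqrt_sq (by positivity), sqrt8, rpow_A, rpow_phi]
  field_simp
  ring_nf
  rw [hw2, show (Real.sqrt (1+x^2))^2 = 1+x^2 from Real.sq_sqrt (by positivity)]
  ring

lemma phi_inv {x : ℝ} (hx : x ≠ 0) : φ (Real.sqrt 3) x⁻¹ = φ (Real.sqrt 3) x := by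
  rw [phi_eq, phi_eq]
  congr 2
  field_simp
  ring

lemma rad1 {x : ℝ} (hx : x ∈ Set.Ioo (0:ℝ) 1) :
    Y x * (1 + Y x) * (4 * (Y x)^2 - 3) * (Y x + Real.sqrt (4 * (Y x)^2 - 3))
      = (Real.sqrt 2 * (1-x^2) * (Y x)^2 / ((x^2+1) * Real.sqrt (x^2+1))
          * Real.sqrt (1 + Y x))^2 := by
  have h1 : (0:ℝ) < 1 - x^2 := by nlinarith [hx.1, hx.2]
  have hy := Y_pos x
  have hA : (0:ℝ) < x^2+1 := by positivity
  have hw2 : (Real.sqrt 2)^2 = 2 := Real.sq_sqrt (by norm_num)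
  have hr2 : (Real.sqrt (x^2+1))^2 = x^2+1 := Real.sq_sqrt hA.le
  have hq2 : (Real.sqrt (1 + Y x))^2 = 1 + Y x := Real.sq_sqrt (by linarith)
  have h2 : Y x + Real.sqrt (4 * (Y x)^2 - 3) = Y x * 2/(x^2+1) := by
    rw [sqrt_fourY hx]; field_simp; ring
  rw [h2, fourY, mul_pow, hq2]
  simp only [div_pow, mul_pow]
  rw [hw2, hr2]
  have hr0 : Real.sqrt (x^2+1) ≠ 0 := by positivity
  field_simp

lemma rpow_Ainv {x : ℝ} (hx : 0 < x) :
    ((x⁻¹)^2+1 : ℝ) ^ (-(3/2) : ℝ) = x^3 * ((x^2+1) * Real.sqrt (x^2+1))⁻¹ := by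
  have hA : (0:ℝ) < x^2+1 := by positivity
  have h : ((x⁻¹)^2+1 : ℝ) = (x^2+1)/x^2 := by
    field_simp
    ring
  rw [h, Real.rpow_neg (by positivity), Real.div_rpow hA.le (sq_nonneg x)]
  have h32 : (x^2+1 : ℝ) ^ ((3:ℝ)/2) = (x^2+1) * Real.sqrt (x^2+1) := by
    rw [show (3/2 : ℝ) = 1 + 1/2 by norm_num, Real.rpow_add hA, Real.rpow_one,
      ← Real.sqrt_eq_rpow]
  have hx32 : ((x^2 : ℝ)) ^ ((3:ℝ)/2) = x^3 := by
    rw [← Real.rpow_natCast x 2, ← Real.rpow_mul hx.le]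
    norm_num
  rw [h32, hx32]
  have hr : (0:ℝ) < Real.sqrt (x^2+1) := Real.sqrt_pos.mpr hA
  field_simp

lemma key1 {x : ℝ} (hx : x ∈ Set.Ioo (0:ℝ) 1) :
    3 / Real.sqrt 8 * (|Yd x| *
      (1 / Real.sqrt (Y x * (1 + Y x) * (4 * (Y x)^2 - 3) *
        (Y x + Real.sqrt (4 * (Y x)^2 - 3)))))
    = |(-(x^2)⁻¹ : ℝ)| * (((x⁻¹)^2+1 : ℝ) ^ (-(3/2) : ℝ) *
        (φ (Real.sqrt 3) x⁻¹ + Real.sqrt (φ (Real.sqrt 3) x⁻¹)) ^ (-(1/2) : ℝ)) := by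
  have h1 : (0:ℝ) < 1 - x^2 := by nlinarith [hx.1, hx.2]
  have hy := Y_pos x
  have hA : (0:ℝ) < x^2+1 := by positivity
  have hx1 := hx.1
  have hw2 : (Real.sqrt 2)^2 = 2 := Real.sq_sqrt (by norm_num)
  have hw : (0:ℝ) < Real.sqrt 2 := by positivity
  have hr : (0:ℝ) < Real.sqrt (x^2+1) := Real.sqrt_pos.mpr hA
  have hq : (0:ℝ) < Real.sqrt (1 + Y x) := Real.sqrt_pos.mpr (by linarith)
  rw [abs_Yd hx, rad1 hx, Real.sqrt_sq (by positivity), sqrt8, phi_inv (ne_of_gt hx1),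
    rpow_phi, rpow_Ainv hx1, abs_neg, abs_of_pos (by positivity)]
  field_simp
  ring_nf
  rw [hw2, show (Real.sqrt (1+x^2))^2 = 1+x^2 from Real.sq_sqrt (by positivity)]
  ring

noncomputable def F (x : ℝ) : ℝ :=
  (x^2+1 : ℝ) ^ (-(3/2) : ℝ) *
    (φ (Real.sqrt 3) x + Real.sqrt (φ (Real.sqrt 3) x)) ^ (-(1/2) : ℝ)

lemma F_cont : Continuous F := by
  apply Continuous.mul
  · apply Continuous.rpow_const (by continuity)
    intro x; left; positivity
  · apply Continuous.rpow_const
    · exact (phi_continuous.add (Real.continuous_sqrt.comp phi_continuous))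
    · intro x; left
      have := phi_pos x
      have := Real.sqrt_nonneg (φ (Real.sqrt 3) x)
      positivity

lemma F_integrable : IntegrableOn F (Set.Ioi 0) := by
  apply Integrable.integrableOn
  apply (integrable_inv_one_add_sq).mono' F_cont.aestronglyMeasurable
  filter_upwards with x
  have hA : (0:ℝ) < x^2+1 := by positivity
  have hb : (1:ℝ) ≤ x^2+1 := by nlinarith [sq_nonneg x]
  have h1 : (x^2+1 : ℝ) ^ (-(3/2) : ℝ) ≤ (x^2+1 : ℝ) ^ (-1 : ℝ) :=
    Real.rpow_le_rpow_of_exponent_le hb (by norm_num)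
  have h2 : (φ (Real.sqrt 3) x + Real.sqrt (φ (Real.sqrt 3) x)) ^ (-(1/2) : ℝ) ≤ 1 := by
    apply Real.rpow_le_one_of_one_le_of_nonpos
    · have := one_le_phi x
      have := Real.sqrt_nonneg (φ (Real.sqrt 3) x)
      linarith
    · norm_num
  have hF0 : 0 ≤ F x := by
    apply mul_nonneg (Real.rpow_nonneg hA.le _)
    apply Real.rpow_nonneg
    have := phi_pos x
    have := Real.sqrt_nonneg (φ (Real.sqrt 3) x)
    linarith
  rw [Real.norm_of_nonneg hF0]
  calc F x ≤ (x^2+1 : ℝ) ^ (-1 : ℝ) * 1 := by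
        have hbase : (0:ℝ) ≤ φ (Real.sqrt 3) x + Real.sqrt (φ (Real.sqrt 3) x) := by
          have := phi_pos x
          have := Real.sqrt_nonneg (φ (Real.sqrt 3) x)
          linarith
        exact mul_le_mul h1 h2 (Real.rpow_nonneg hbase _) (Real.rpow_nonneg hA.le _)
    _ = (1 + x^2)⁻¹ := by rw [Real.rpow_neg_one, mul_one, add_comm]

lemma inv_image : (fun x : ℝ => x⁻¹) '' Set.Ioo 0 1 = Set.Ioi 1 := by
  ext y
  simp only [Set.mem_image, Set.mem_Ioo, Set.mem_Ioi]
  constructor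
  · rintro ⟨x, ⟨hx0, hx1⟩, rfl⟩
    have h := inv_strictAnti₀ hx0 hx1
    rwa [inv_one] at h
  · intro hy
    have hy0 : (0:ℝ) < y := lt_trans one_pos hy
    exact ⟨y⁻¹, ⟨inv_pos.mpr hy0, inv_lt_one_of_one_lt₀ hy⟩, inv_inv y⟩

theorem stmt_5 :
    f (3 / 2) (Real.sqrt 3) = (3 / Real.sqrt 8) *
      ((∫ y in Set.Ioo (Real.sqrt 3 / 2) 1,
          1 / Real.sqrt (y * (1 + y) * (4 * y ^ 2 - 3) * (y + Real.sqrt (4 * y ^ 2 - 3)))) +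
       (∫ y in Set.Ioo (Real.sqrt 3 / 2) 1,
          1 / Real.sqrt (y * (1 + y) * (4 * y ^ 2 - 3) * (y - Real.sqrt (4 * y ^ 2 - 3))))) := by
  have hc : f (3/2) (Real.sqrt 3) = ∫ x in Set.Ioi (0:ℝ), F x := by
    rfl
  have hsub2 : (∫ y in Set.Ioo (Real.sqrt 3/2) 1,
        1 / Real.sqrt (y * (1 + y) * (4 * y ^ 2 - 3) * (y - Real.sqrt (4 * y ^ 2 - 3))))
      = ∫ x in Set.Ioo (0:ℝ) 1, |Yd x| •
          (1 / Real.sqrt (Y x * (1 + Y x) * (4 * (Y x) ^ 2 - 3) *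
            (Y x - Real.sqrt (4 * (Y x) ^ 2 - 3)))) := by
    rw [← Y_image]
    exact integral_image_eq_integral_abs_deriv_smul measurableSet_Ioo
      (fun x _ => (hasDerivAt_Y x).hasDerivWithinAt) Y_injOn _
  have hsub1 : (∫ y in Set.Ioo (Real.sqrt 3/2) 1,
        1 / Real.sqrt (y * (1 + y) * (4 * y ^ 2 - 3) * (y + Real.sqrt (4 * y ^ 2 - 3))))
      = ∫ x in Set.Ioo (0:ℝ) 1, |Yd x| •
          (1 / Real.sqrt (Y x * (1 + Y x) * (4 * (Y x) ^ 2 - 3) *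
            (Y x + Real.sqrt (4 * (Y x) ^ 2 - 3)))) := by
    rw [← Y_image]
    exact integral_image_eq_integral_abs_deriv_smul measurableSet_Ioo
      (fun x _ => (hasDerivAt_Y x).hasDerivWithinAt) Y_injOn _
  have hIoi1 : (∫ x in Set.Ioi (1:ℝ), F x)
      = ∫ x in Set.Ioo (0:ℝ) 1, |(-(x^2)⁻¹ : ℝ)| • F x⁻¹ := by
    rw [← inv_image]
    exact integral_image_eq_integral_abs_deriv_smul measurableSet_Ioo
      (fun x hx => (hasDerivAt_inv (ne_of_gt hx.1)).hasDerivWithinAt)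
      (fun a _ b _ h => inv_injective h) F
  have h2 : 3 / Real.sqrt 8 * (∫ y in Set.Ioo (Real.sqrt 3/2) 1,
        1 / Real.sqrt (y * (1 + y) * (4 * y ^ 2 - 3) * (y - Real.sqrt (4 * y ^ 2 - 3))))
      = ∫ x in Set.Ioo (0:ℝ) 1, F x := by
    rw [hsub2, ← integral_const_mul]
    apply setIntegral_congr_fun measurableSet_Ioo
    intro x hx
    simp only [smul_eq_mul]
    rw [F]
    exact key2 hx
  have h1 : 3 / Real.sqrt 8 * (∫ y in Set.Ioo (Real.sqrt 3/2) 1,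
        1 / Real.sqrt (y * (1 + y) * (4 * y ^ 2 - 3) * (y + Real.sqrt (4 * y ^ 2 - 3))))
      = ∫ x in Set.Ioi (1:ℝ), F x := by
    rw [hIoi1, hsub1, ← integral_const_mul]
    apply setIntegral_congr_fun measurableSet_Ioo
    intro x hx
    simp only [smul_eq_mul]
    rw [F]
    exact key1 hx
  have hsplit : (∫ x in Set.Ioi (0:ℝ), F x)
      = (∫ x in Set.Ioo (0:ℝ) 1, F x) + ∫ x in Set.Ioi (1:ℝ), F x := by
    rw [← Set.Ioc_union_Ioi_eq_Ioi (zero_le_one (α := ℝ)),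
      setIntegral_union (Set.Ioc_disjoint_Ioi_same) measurableSet_Ioi
        (F_integrable.mono_set (fun x hx => hx.1))
        (F_integrable.mono_set (fun x hx => Set.mem_Ioi.mpr (lt_trans zero_lt_one hx))),
      integral_Ioc_eq_integral_Ioo]
  rw [hc, hsplit, ← h2, ← h1]
  ring
end
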